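/- arXiv:0903.0362 — 6 statements merged into one kernel-verified Lean document; each statement's English description precedes it below -/
import Mathlib

section
/- Let A be a finite-dimensional associative algebra over a field F of characteristic zero, with Wedderburn decomposition A = \bar{A} \oplus J(A) where \bar{A} is semisimple and J(A) is the Jacobson radical with nilpotency index s (J(A)^s = 0). Let f be a multilinear polynomial that has r \ge s disjoint alternating sets of variables, each of cardinality m > dim_F(\bar{A}). Then f is a polynomial identity of A. -/
open Function Finset

/-!
Split every argument along `A = S ⊕ J` and expand by multilinearity. In a term where some
alternating block takes all its values in `S`, these `m > dim S` values are linearly dependent,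
and a multilinear map that vanishes whenever two arguments of the block coincide vanishes on a
dependent family. In every other term each of the `r ≥ s` blocks contributes a factor from `J`,
and since `J` absorbs left multiplication the monomials collapse to products of `s` elements of
`J`, which are zero.
-/

section LeftAbsorbing

variable {A : Type*} [MonoidWithZero A] {J : Set A} [DecidablePred (· ∈ J)]

/-- A factor outside `J` is absorbed into the next factor from `J`. -/
theorem List.exists_prod_eq_prod_ofFn_mul (hJ : ∀ a, ∀ x ∈ J, a * x ∈ J) :
    ∀ (L : List A) (n : ℕ), n ≤ L.countP (· ∈ J) →
      ∃ z : Fin n → A, (∀ i, z i ∈ J) ∧ ∃ d, L.prod = (List.ofFn z).prod * d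
  | L, 0, _ => ⟨Fin.elim0, Fin.rec0, L.prod, by simp⟩
  | [], n + 1, h => by simp at h
  | a :: L, n + 1, h => by
    by_cases ha : a ∈ J
    · obtain ⟨z, hz, d, hL⟩ :=
        List.exists_prod_eq_prod_ofFn_mul hJ L n (by simpa [List.countP_cons, ha] using h)
      refine ⟨Fin.cons a z, Fin.cases ha hz, d, ?_⟩
      simp [List.ofFn_succ, hL, mul_assoc]
    · obtain ⟨z, hz, d, hL⟩ :=
        List.exists_prod_eq_prod_ofFn_mul hJ L (n + 1) (by simpa [List.countP_cons, ha] using h)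
      refine ⟨Fin.cons (a * z 0) (Fin.tail z), Fin.cases (hJ a _ (hz 0)) (fun i => hz i.succ),
        d, ?_⟩
      simp [List.ofFn_succ, Fin.tail, hL, mul_assoc]

theorem List.prod_eq_zero_of_le_countP (hJ : ∀ a, ∀ x ∈ J, a * x ∈ J) {s : ℕ}
    (hnil : ∀ z : Fin s → A, (∀ i, z i ∈ J) → (List.ofFn z).prod = 0) {L : List A}
    (hL : s ≤ L.countP (· ∈ J)) : L.prod = 0 := by
  obtain ⟨z, hz, d, hprod⟩ := L.exists_prod_eq_prod_ofFn_mul hJ s hL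
  rw [hprod, hnil z hz, zero_mul]

end LeftAbsorbing

theorem List.le_countP_ofFn {α : Type*} (P : α → Prop) [DecidablePred P] {n r : ℕ}
    {f : Fin n → α} (q : Fin r → Fin n) (hq : Injective q) (hP : ∀ t, P (f (q t))) :
    r ≤ (List.ofFn f).countP (P ·) := by
  rw [← Multiset.coe_countP, ← Fin.univ_val_map, Multiset.countP_map,
    ← Finset.filter_val, Finset.card_val]
  simpa using card_le_card_of_injOn (s := univ) q
    (fun t _ => Finset.mem_filter.2 ⟨Finset.mem_univ _, hP t⟩) hq.injOn

theorem Submodule.not_linearIndependent_of_finrank_lt {K V κ : Type*} [DivisionRing K]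
    [AddCommGroup V] [Module K V] [Fintype κ] (P : Submodule K V) [FiniteDimensional K P]
    {u : κ → V} (hu : ∀ i, u i ∈ P) (h : Module.finrank K P < Fintype.card κ) :
    ¬ LinearIndependent K u := fun hli =>
  h.not_ge <| (finrank_span_eq_card hli).symm.le.trans <|
    Submodule.finrank_mono (span_le.2 (Set.range_subset_iff.2 hu))

theorem MultilinearMap.map_eq_zero_of_not_linearIndependent {K M N ι κ : Type*} [DivisionRing K]
    [AddCommGroup M] [Module K M] [AddCommGroup N] [Module K N] [DecidableEq ι] [Fintype κ]
    (G : MultilinearMap K (fun _ : ι => M) N) (e : κ → ι)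
    (hG : ∀ v : ι → M, ∀ i j, i ≠ j → v (e i) = v (e j) → G v = 0)
    {v : ι → M} (hv : ¬ LinearIndependent K (v ∘ e)) : G v = 0 := by
  classical
  obtain ⟨g, hg, i₀, hi₀⟩ := Fintype.not_linearIndependent_iff.mp hv
  have hrepr : v (e i₀) = ∑ i ∈ univ.erase i₀, (-(g i₀)⁻¹ * g i) • v (e i) := by
    rw [← add_sum_erase _ _ (mem_univ i₀)] at hg
    simp only [comp_apply] at hg
    calc v (e i₀) = (g i₀)⁻¹ • g i₀ • v (e i₀) := (inv_smul_smul₀ hi₀ _).symm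
      _ = _ := by
        rw [eq_neg_of_add_eq_zero_left hg, smul_neg, smul_sum, ← sum_neg_distrib]
        simp only [neg_mul, neg_smul, mul_smul]
  calc G v = G (update v (e i₀) (∑ i ∈ univ.erase i₀, (-(g i₀)⁻¹ * g i) • v (e i))) := by
        rw [← hrepr, update_eq_self]
    _ = ∑ i ∈ univ.erase i₀, (-(g i₀)⁻¹ * g i) • G (update v (e i₀) (v (e i))) := by
        simp only [G.map_update_sum, G.map_update_smul]
    _ = 0 := sum_eq_zero fun i hi => by
        rw [hG _ i₀ i (ne_of_mem_erase hi).symm (by simp [update_apply]), smul_zero]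

section MultilinearPolynomial

variable {F A ι : Type*} [CommRing F] [Ring A] [Algebra F A] [Fintype ι] [DecidableEq ι] {n : ℕ}

variable (A) in
def multilinearEval (c : (Fin n ≃ ι) → F) : MultilinearMap F (fun _ : ι => A) A :=
  ∑ w, c w • (MultilinearMap.mkPiAlgebraFin F n A).domDomCongr w

theorem multilinearEval_apply (c : (Fin n ≃ ι) → F) (v : ι → A) :
    multilinearEval A c v = ∑ w, c w • (List.ofFn fun p => v (w p)).prod := by
  simp [multilinearEval]

/-- The terms of `w` and `w.trans (swap x y)` cancel; the pairing has no fixed points, so no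
assumption on the characteristic is needed. -/
theorem multilinearEval_eq_zero_of_eq {c : (Fin n ≃ ι) → F} {x y : ι} (hxy : x ≠ y)
    (hc : ∀ w, c (w.trans (Equiv.swap x y)) = - c w) {v : ι → A} (hv : v x = v y) :
    multilinearEval A c v = 0 := by
  rw [multilinearEval_apply]
  refine sum_ninvolution (fun w => w.trans (Equiv.swap x y)) (fun w => ?_) (fun w _ h => hxy ?_)
    (fun _ => mem_univ _) (fun w => by ext; simp)
  · simp [hc, Equiv.apply_swap_eq_self hv]
  · simpa using (Equiv.ext_iff.1 h (w.symm x)).symm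

end MultilinearPolynomial

theorem stmt_2_general {F : Type*} [Field F] {A : Type*} [Ring A] [Algebra F A]
    [FiniteDimensional F A]
    (S : Subalgebra F A)
    (J : Submodule F A)
    (hJl : ∀ a : A, ∀ x ∈ J, a * x ∈ J)
    (hcompl : IsCompl (Subalgebra.toSubmodule S) J)
    (s : ℕ) (hnil : ∀ z : Fin s → A, (∀ i, z i ∈ J) → (List.ofFn z).prod = 0)
    (r m k : ℕ) (hr : s ≤ r) (hm : Module.finrank F S < m)
    (c : (Fin (r * m + k) ≃ (Fin r × Fin m) ⊕ Fin k) → F)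
    (halt : ∀ (w : Fin (r * m + k) ≃ (Fin r × Fin m) ⊕ Fin k)
        (t : Fin r) (i j : Fin m), i ≠ j →
      c (w.trans (Equiv.swap (Sum.inl (t, i)) (Sum.inl (t, j)))) = - c w)
    (v : (Fin r × Fin m) ⊕ Fin k → A) :
    ∑ w : Fin (r * m + k) ≃ (Fin r × Fin m) ⊕ Fin k,
      c w • (List.ofFn fun p => v (w p)).prod = 0 := by
  classical
  rw [← multilinearEval_apply]
  choose sv jv hsv hjv hv using Submodule.codisjoint_iff_exists_add_eq.1 hcompl.codisjoint
  rw [show v = sv ∘ v + jv ∘ v from funext fun x => (hv (v x)).symm,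
    MultilinearMap.map_add_univ]
  refine sum_eq_zero fun T _ => ?_
  by_cases hT : ∃ t, ∀ i, Sum.inl (t, i) ∈ T
  · obtain ⟨t, ht⟩ := hT
    refine (multilinearEval A c).map_eq_zero_of_not_linearIndependent (fun i => Sum.inl (t, i))
      (fun u i j hij hu =>
        multilinearEval_eq_zero_of_eq (by simpa using hij) (halt · t i j hij) hu) ?_
    refine (Subalgebra.toSubmodule S).not_linearIndependent_of_finrank_lt (fun i => ?_) ?_
    · simpa [Finset.piecewise_eq_of_mem _ _ _ (ht i)] using hsv _
    · simpa using hm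
  · push Not at hT
    choose i hi using hT
    rw [multilinearEval_apply]
    refine sum_eq_zero fun w _ => ?_
    rw [List.prod_eq_zero_of_le_countP hJl hnil, smul_zero]
    refine hr.trans (List.le_countP_ofFn _ (fun t => w.symm (Sum.inl (t, i t))) ?_ fun t => ?_)
    · intro t₁ t₂ h
      simpa using congrArg Prod.fst (Sum.inl_injective (w.symm.injective h))
    · rw [Equiv.apply_symm_apply, Finset.piecewise_eq_of_notMem _ _ _ (hi t)]
      exact hjv _

/-- Let `A` be a finite-dimensional algebra over a field `F` of
characteristic zero with Wedderburn decomposition `A = S ⊕ J` (`S` a semisimple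
subalgebra, `J` the radical, `J^s = 0`).  A multilinear polynomial (represented here by
its coefficients `c w`, one for each ordering `w` of the variables
`(Fin r × Fin m) ⊕ Fin k`) which has `r ≥ s` disjoint alternating sets of variables each
of cardinality `m > dim_F S` is a polynomial identity of `A`, i.e. every evaluation
vanishes. -/
theorem stmt_2 {F : Type*} [Field F] [CharZero F] {A : Type*} [Ring A] [Algebra F A]
    [FiniteDimensional F A]
    (S : Subalgebra F A) [IsSemisimpleRing S]
    (J : Submodule F A)
    (hJl : ∀ a : A, ∀ x ∈ J, a * x ∈ J)
    (hJr : ∀ a : A, ∀ x ∈ J, x * a ∈ J)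
    (hcompl : IsCompl (Subalgebra.toSubmodule S) J)
    (s : ℕ) (hnil : ∀ z : Fin s → A, (∀ i, z i ∈ J) → (List.ofFn z).prod = 0)
    (r m k : ℕ) (hr : s ≤ r) (hm : Module.finrank F S < m)
    (c : (Fin (r * m + k) ≃ (Fin r × Fin m) ⊕ Fin k) → F)
    (halt : ∀ (w : Fin (r * m + k) ≃ (Fin r × Fin m) ⊕ Fin k)
        (t : Fin r) (i j : Fin m), i ≠ j →
      c (w.trans (Equiv.swap (Sum.inl (t, i)) (Sum.inl (t, j)))) = - c w)
    (v : (Fin r × Fin m) ⊕ Fin k → A) :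
    ∑ w : Fin (r * m + k) ≃ (Fin r × Fin m) ⊕ Fin k,
      c w • (List.ofFn fun p => v (w p)).prod = 0 :=
  stmt_2_general S J hJl hcompl s hnil r m k hr hm c halt v
end

section
/- Let A be a finite-dimensional G-graded algebra over an algebraically closed field F of characteristic zero, with semisimple part \bar{A} (so A = \bar{A} \oplus J(A) as G-graded vector spaces), nilpotency index n_A of J(A), and d_g = dim_F(\bar{A}_g) for each g \in G. If a multilinear G-graded polynomial f has, for some g \in G, at least n_A disjoint alternating sets of g-homogeneous variables, each of cardinality d_g + 1, then f is a G-graded identity of A. -/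
/-!
Write each value of a `g`-variable as `s + n` with `s ∈ Sb g` and `n ∈ J`, and expand the
multilinear polynomial. In a term where some alternating set receives only semisimple parts,
these are `d + 1` vectors of the `d`-dimensional space `Sb g`, hence linearly dependent, and a
polynomial alternating in that set vanishes on them. Otherwise each of the `r ≥ n_A`
alternating sets puts a radical factor into every monomial; as `J` is a left ideal, such a
monomial is a product of `n_A` elements of `J` times one more factor, so it vanishes.
-/

open Finset Function

theorem List.countP_ofFn {α : Type*} (p : α → Prop) [DecidablePred p] {n : ℕ}
    (f : Fin n → α) :
    (List.ofFn f).countP p = #{i | p (f i)} := by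
  rw [← Multiset.coe_countP, ← Fin.univ_val_map, Multiset.countP_map, ← Finset.filter_val,
    Finset.card_val]

section LeftIdeal

variable {M : Type*} [MonoidWithZero M] {S : Set M} [DecidablePred (· ∈ S)]

theorem List.exists_prod_eq_prod_mul_of_le_countP (hS : ∀ a, ∀ x ∈ S, a * x ∈ S) :
    ∀ (l : List M) (j : ℕ), j ≤ l.countP (· ∈ S) →
      ∃ zs : List M, zs.length = j ∧ (∀ z ∈ zs, z ∈ S) ∧ ∃ a, l.prod = zs.prod * a
  | [], j, hj => by
    obtain rfl : j = 0 := by simpa using hj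
    exact ⟨[], rfl, by simp, 1, by simp⟩
  | _, 0, _ => ⟨[], rfl, by simp, _, (one_mul _).symm⟩
  | x :: l, j + 1, hj => by
    rw [List.countP_cons] at hj
    by_cases hx : x ∈ S
    · obtain ⟨zs, hlen, hzs, a, hl⟩ :=
        exists_prod_eq_prod_mul_of_le_countP hS l j (by simpa [hx] using hj)
      refine ⟨x :: zs, by simp [hlen], ?_, a, by simp [hl, mul_assoc]⟩
      simpa [hx] using hzs
    · obtain ⟨_ | ⟨z, zs⟩, hlen, hzs, a, hl⟩ :=
        exists_prod_eq_prod_mul_of_le_countP hS l (j + 1) (by simpa [hx] using hj)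
      · simp at hlen
      refine ⟨x * z :: zs, by simpa using hlen, ?_, a, by simp [hl, mul_assoc]⟩
      simp only [List.mem_cons, forall_eq_or_imp] at hzs ⊢
      exact ⟨hS x z hzs.1, hzs.2⟩

theorem List.prod_eq_zero_of_le_countP_s3 (hS : ∀ a, ∀ x ∈ S, a * x ∈ S) {n : ℕ}
    (hnil : ∀ z : Fin n → M, (∀ i, z i ∈ S) → (List.ofFn z).prod = 0)
    {l : List M} (hl : n ≤ l.countP (· ∈ S)) : l.prod = 0 := by
  obtain ⟨zs, rfl, hzs, a, hprod⟩ := l.exists_prod_eq_prod_mul_of_le_countP hS _ hl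
  have hzero : zs.prod = 0 := by
    simpa using hnil zs.get fun i => hzs _ (zs.get_mem i)
  rw [hprod, hzero, zero_mul]

end LeftIdeal

section Alternating

variable {K M N ι κ : Type*} [Field K] [AddCommGroup M] [Module K M] [AddCommGroup N]
  [Module K N]

theorem MultilinearMap.map_eq_zero_of_not_linearIndependent_comp
    (T : MultilinearMap K (fun _ : ι => M) N) {e : κ → ι} (he : Injective e)
    (hT : ∀ m : ι → M, ∀ i j, i ≠ j → m (e i) = m (e j) → T m = 0)
    {m : ι → M} (hm : ¬ LinearIndependent K (m ∘ e)) : T m = 0 := by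
  classical
  let σ := Equiv.ofInjective e he
  let extend (a : κ → M) (u : ι) : M :=
    if h : u ∈ Set.range e then a (σ.symm ⟨u, h⟩) else m u
  have extend_apply (a : κ → M) (i : κ) : extend a (e i) = a i := by
    simp [extend, σ, Equiv.ofInjective_symm_apply]
  let φ : M [⋀^κ]→ₗ[K] N :=
    { (T.domDomRestrict (· ∈ Set.range e) fun u => m u).domDomCongr σ.symm with
      map_eq_zero_of_eq' := fun a i j hij hne =>
        hT (extend a) i j hne (by rw [extend_apply, extend_apply, hij]) }
  have hextend : extend (m ∘ e) = m := by
    funext u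
    by_cases h : u ∈ Set.range e
    · obtain ⟨i, rfl⟩ := h
      exact extend_apply _ i
    · exact dif_neg h
  have hφ : φ (m ∘ e) = T (extend (m ∘ e)) := rfl
  rw [← hextend, ← hφ]
  exact φ.map_linearDependent (m ∘ e) hm

theorem Submodule.not_linearIndependent_of_forall_mem [Fintype ι] {W : Submodule K M}
    [Module.Finite K W] {f : ι → M} (hf : ∀ i, f i ∈ W)
    (hcard : Module.finrank K W < Fintype.card ι) : ¬ LinearIndependent K f := fun hli =>
  hcard.not_ge (LinearIndependent.of_comp W.subtype (v := fun i => (⟨f i, hf i⟩ : W))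
    hli).fintype_card_le_finrank

end Alternating

section PolyMap

variable {R A ι : Type*} [CommRing R] [Ring A] [Algebra R A] [Fintype ι] [DecidableEq ι]
  {n : ℕ}

noncomputable def polyMultilinearMap (c : (Fin n ≃ ι) → R) :
    MultilinearMap R (fun _ : ι => A) A :=
  ∑ w, c w • (MultilinearMap.mkPiAlgebraFin R n A).domDomCongr w

theorem polyMultilinearMap_apply (c : (Fin n ≃ ι) → R) (m : ι → A) :
    polyMultilinearMap c m = ∑ w, c w • (List.ofFn fun p => m (w p)).prod := by
  simp [polyMultilinearMap]

theorem polyMultilinearMap_eq_zero_of_eq {c : (Fin n ≃ ι) → R} {a b : ι}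
    (hab : a ≠ b) (hc : ∀ w, c (w.trans (Equiv.swap a b)) = -c w) {m : ι → A}
    (hm : m a = m b) :
    polyMultilinearMap c m = 0 := by
  rw [polyMultilinearMap_apply]
  refine sum_involution (fun w _ => w.trans (Equiv.swap a b)) (fun w _ => ?_)
    (fun w _ _ => ?_) (fun _ _ => mem_univ _) (fun w _ => by ext; simp)
  · simp [hc, Equiv.apply_swap_eq_self hm]
  · exact fun h => hab (by simpa using (congrArg (· (w.symm a)) h).symm)

theorem polyMultilinearMap_eq_zero_of_le_card {S : Set A} [DecidablePred (· ∈ S)]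
    (hS : ∀ a, ∀ x ∈ S, a * x ∈ S) {nA : ℕ}
    (hnil : ∀ z : Fin nA → A, (∀ i, z i ∈ S) → (List.ofFn z).prod = 0)
    (c : (Fin n ≃ ι) → R) {m : ι → A} (hm : nA ≤ #{u | m u ∈ S}) :
    polyMultilinearMap c m = 0 := by
  rw [polyMultilinearMap_apply]
  refine sum_eq_zero fun w _ => ?_
  rw [List.prod_eq_zero_of_le_countP_s3 hS hnil ?_, smul_zero]
  rw [List.countP_ofFn]
  exact hm.trans <|
    card_le_card_of_injOn w.symm (fun u hu => by simpa using hu) w.symm.injective.injOn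

end PolyMap

theorem stmt_3_general {F : Type*} [Field F] {G : Type*}
    {A : Type*} [Ring A] [Algebra F A] [FiniteDimensional F A]
    (𝒜 : G → Submodule F A) (Sb : G → Submodule F A) (J : Submodule F A)
    (hJl : ∀ a : A, ∀ x ∈ J, a * x ∈ J) (hsplit : ∀ g, 𝒜 g ≤ Sb g ⊔ J)
    (nA : ℕ) (hnil : ∀ z : Fin nA → A, (∀ i, z i ∈ J) → (List.ofFn z).prod = 0)
    (g : G) (d : ℕ) (hd : Module.finrank F (Sb g) = d)
    (r k : ℕ) (hr : nA ≤ r)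
    (c : (Fin (r * (d + 1) + k) ≃ (Fin r × Fin (d + 1)) ⊕ Fin k) → F)
    (halt : ∀ (w : Fin (r * (d + 1) + k) ≃ (Fin r × Fin (d + 1)) ⊕ Fin k)
        (t : Fin r) (i j : Fin (d + 1)), i ≠ j →
      c (w.trans (Equiv.swap (Sum.inl (t, i)) (Sum.inl (t, j)))) = - c w)
    (v : (Fin r × Fin (d + 1)) ⊕ Fin k → A)
    (hvx : ∀ t i, v (Sum.inl (t, i)) ∈ 𝒜 g) :
    ∑ w : Fin (r * (d + 1) + k) ≃ (Fin r × Fin (d + 1)) ⊕ Fin k,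
      c w • (List.ofFn fun p => v (w p)).prod = 0 := by
  classical
  choose s hs n hn hsn using fun p : Fin r × Fin (d + 1) =>
    Submodule.mem_sup.mp (hsplit g (hvx p.1 p.2))
  rw [← polyMultilinearMap_apply]
  have hv : v = Sum.elim s (v ∘ Sum.inr) + Sum.elim n 0 := by
    ext (p | j) <;> simp [hsn]
  rw [hv, MultilinearMap.map_add_univ]
  refine sum_eq_zero fun U _ => ?_
  by_cases hblock : ∃ t, ∀ i, Sum.inl (t, i) ∈ U
  · obtain ⟨t, ht⟩ := hblock
    exact MultilinearMap.map_eq_zero_of_not_linearIndependent_comp _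
      (e := fun i => Sum.inl (t, i)) (fun i j h => by simpa using h)
      (fun m i j hij heq => polyMultilinearMap_eq_zero_of_eq (by simpa using hij)
        (fun w => halt w t i j hij) heq)
      (Submodule.not_linearIndependent_of_forall_mem (W := Sb g)
        (fun i => by simpa [ht i] using hs (t, i)) (by simp [hd]))
  · push Not at hblock
    choose iT hiT using hblock
    refine polyMultilinearMap_eq_zero_of_le_card (S := J) hJl hnil c ?_
    calc nA ≤ r := hr
      _ = #(univ : Finset (Fin r)) := (card_fin r).symm
      _ ≤ _ := card_le_card_of_injOn (fun t => Sum.inl (t, iT t))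
        (fun t _ => by simpa [hiT t] using hn (t, iT t))
        (fun t _ t' _ h => (Prod.mk.inj (Sum.inl_injective h)).1)

/-- Let `A` be a finite-dimensional `G`-graded algebra over an
algebraically closed field `F` of characteristic zero, with graded semisimple part
given by components `Sb g ≤ 𝒜 g` (so `𝒜 g = Sb g ⊕ (J ⊓ 𝒜 g)` for each `g`), the
radical `J` a graded ideal with `J^{n_A} = 0`, and `d = dim_F (Sb g)`.  A multilinear
`G`-graded polynomial (represented by coefficients `c w`) having at least `n_A`
disjoint alternating sets of `g`-homogeneous variables, each of cardinality `d + 1`,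
is a `G`-graded identity of `A`: every admissible evaluation vanishes. -/
theorem stmt_3 {F : Type*} [Field F] [CharZero F] [IsAlgClosed F]
    {G : Type*} [Group G] [Finite G] [DecidableEq G]
    {A : Type*} [Ring A] [Algebra F A] [FiniteDimensional F A]
    (𝒜 : G → Submodule F A) [DirectSum.Decomposition 𝒜]
    (hmul : ∀ g h : G, ∀ a ∈ 𝒜 g, ∀ b ∈ 𝒜 h, a * b ∈ 𝒜 (g * h))
    (Sb : G → Submodule F A) (hSle : ∀ g, Sb g ≤ 𝒜 g)
    (J : Submodule F A)
    (hJl : ∀ a : A, ∀ x ∈ J, a * x ∈ J)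
    (hJr : ∀ a : A, ∀ x ∈ J, x * a ∈ J)
    (hJgr : ∀ x ∈ J, ∀ g : G, ((DirectSum.decompose 𝒜 x) g : A) ∈ J)
    (hsplit : ∀ g, 𝒜 g ≤ Sb g ⊔ J) (hdisj : ∀ g, Disjoint (Sb g) J)
    (nA : ℕ) (hnil : ∀ z : Fin nA → A, (∀ i, z i ∈ J) → (List.ofFn z).prod = 0)
    (g : G) (d : ℕ) (hd : Module.finrank F (Sb g) = d)
    (r k : ℕ) (hr : nA ≤ r)
    (γ : Fin k → G)
    (c : (Fin (r * (d + 1) + k) ≃ (Fin r × Fin (d + 1)) ⊕ Fin k) → F)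
    (halt : ∀ (w : Fin (r * (d + 1) + k) ≃ (Fin r × Fin (d + 1)) ⊕ Fin k)
        (t : Fin r) (i j : Fin (d + 1)), i ≠ j →
      c (w.trans (Equiv.swap (Sum.inl (t, i)) (Sum.inl (t, j)))) = - c w)
    (v : (Fin r × Fin (d + 1)) ⊕ Fin k → A)
    (hvx : ∀ t i, v (Sum.inl (t, i)) ∈ 𝒜 g)
    (hvy : ∀ i, v (Sum.inr i) ∈ 𝒜 (γ i)) :
    ∑ w : Fin (r * (d + 1) + k) ≃ (Fin r × Fin (d + 1)) ⊕ Fin k,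
      c w • (List.ofFn fun p => v (w p)).prod = 0 :=
  stmt_3_general 𝒜 Sb J hJl hsplit nA hnil g d hd r k hr c halt v hvx
end

section
/- Let W be an algebra over a field F that is (not necessarily properly) covered by subspaces W_g indexed by a finite group G, satisfying W_g W_h \subseteq W_{gh} and \sum_g W_g = W. Let FG be the group algebra with its natural G-grading and let W_G be the subalgebra of W \otimes_F FG generated by the subspaces W_g \otimes Fg for g \in G. Then: (a) W_G is G-graded with (W_G)_g = W_g \otimes Fg; and (b) the map W_G \to W sending x \otimes g \mapsto x is a surjective G-graded algebra homomorphism onto W equipped with any genuine G-grading V = \oplus V_g with V_g \subseteq W_g, whenever the W_g are the preimages of such V_g under a surjection. -/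
/-!
Since `FG` is free on `G`, `W ⊗ FG ≅ G →₀ W` with `a ⊗ g ↦ single g a`, so the subspaces
`W_g ⊗ Fg` sit in distinct coordinate summands and are independent. The rule
`(a ⊗ g)(b ⊗ h) = ab ⊗ gh` makes them multiply along `G`, so their sum is already closed under
multiplication and is the subalgebra they generate. The map `x ⊗ g ↦ η x` is the algebra map
`η ⊗ (augmentation FG → F)`, and it carries `W_g ⊗ Fg` onto `η (η⁻¹ ℬ_g) = ℬ_g`.
-/

open scoped TensorProduct

/-- The `g`-component `W_g ⊗ Fg` inside `W ⊗_F FG`. -/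
noncomputable def coverComp {F : Type*} [Field F] {G : Type*} [Group G] {W : Type*} [Ring W]
    [Algebra F W] (𝒲 : G → Submodule F W) (g : G) :
    Submodule F (W ⊗[F] MonoidAlgebra F G) :=
  Submodule.span F
    {z | ∃ a ∈ 𝒲 g, z = a ⊗ₜ[F] (MonoidAlgebra.single g (1 : F))}

open TensorProduct in
theorem iSupIndep_range_flip_mk_basis {R M N κ : Type*} [CommSemiring R] [AddCommMonoid M]
    [Module R M] [AddCommMonoid N] [Module R N] (𝒞 : Module.Basis κ R N) :
    iSupIndep fun i ↦ LinearMap.range ((TensorProduct.mk R M N).flip (𝒞 i)) := by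
  convert LinearMap.iSupIndep_map _ (sum_tmul_basis_right_injective 𝒞)
    (iSupIndep_range_lsingle κ R M) using 1
  ext i : 1
  rw [← LinearMap.range_comp, Finsupp.lsum_comp_lsingle]

section GradedFamily

variable {R A ι : Type*} [CommSemiring R] [NonUnitalNonAssocSemiring A] [Module R A] [Mul ι]
  {S : ι → Submodule R A}

theorem Submodule.mul_mem_iSup_of_mul_mem (hS : ∀ i j, ∀ x ∈ S i, ∀ y ∈ S j, x * y ∈ S (i * j))
    {x y : A} (hx : x ∈ ⨆ i, S i) (hy : y ∈ ⨆ i, S i) : x * y ∈ ⨆ i, S i := by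
  induction hx using Submodule.iSup_induction' with
  | mem i x hxi =>
    induction hy using Submodule.iSup_induction' with
    | mem j y hyj => exact Submodule.mem_iSup_of_mem (i * j) (hS i j x hxi y hyj)
    | zero => simp
    | add y z _ _ ihy ihz => rw [mul_add]; exact add_mem ihy ihz
  | zero => simp
  | add x z _ _ ihx ihz => rw [add_mul]; exact add_mem ihx ihz

theorem NonUnitalAlgebra.toSubmodule_adjoin_iUnion_eq_iSup [IsScalarTower R A A]
    [SMulCommClass R A A] (hS : ∀ i j, ∀ x ∈ S i, ∀ y ∈ S j, x * y ∈ S (i * j)) :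
    NonUnitalSubalgebra.toSubmodule (NonUnitalAlgebra.adjoin R (⋃ i, (S i : Set A))) =
      ⨆ i, S i := by
  refine le_antisymm ?_ (iSup_le fun i x hx ↦ NonUnitalAlgebra.subset_adjoin R ?_)
  · exact NonUnitalAlgebra.adjoin_le (S := (⨆ i, S i).toNonUnitalSubalgebra
      fun _ _ hx hy ↦ Submodule.mul_mem_iSup_of_mul_mem hS hx hy)
      (Set.iUnion_subset fun i ↦ le_iSup S i)
  · exact Set.mem_iUnion.mpr ⟨i, hx⟩

end GradedFamily

section Augmentation

variable {R W B G : Type*} [CommSemiring R] [Semiring W] [Algebra R W] [Semiring B] [Algebra R B]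
  [Monoid G]

noncomputable def augmentTensor (η : W →ₐ[R] B) : W ⊗[R] MonoidAlgebra R G →ₐ[R] B :=
  (Algebra.TensorProduct.rid R R B).toAlgHom.comp
    (Algebra.TensorProduct.map η (MonoidAlgebra.lift R R G 1))

@[simp]
theorem augmentTensor_tmul_single (η : W →ₐ[R] B) (a : W) (g : G) (r : R) :
    augmentTensor η (a ⊗ₜ MonoidAlgebra.single g r) = r • η a := by
  simp [augmentTensor, MonoidAlgebra.lift_single]

theorem toLinearMap_augmentTensor (η : W →ₐ[R] B) :
    (augmentTensor (G := G) η).toLinearMap =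
      (TensorProduct.rid R B).toLinearMap ∘ₗ
        TensorProduct.map η.toLinearMap (MonoidAlgebra.lift R R G 1).toLinearMap := by
  ext a g
  simp [augmentTensor, MonoidAlgebra.lift_single]

end Augmentation

section CoverComp

variable {F : Type*} [Field F] {G : Type*} [Group G] {W : Type*} [Ring W] [Algebra F W]

theorem coverComp_eq_map (𝒲 : G → Submodule F W) (g : G) :
    coverComp 𝒲 g =
      (𝒲 g).map ((TensorProduct.mk F W (MonoidAlgebra F G)).flip (MonoidAlgebra.single g 1)) := by
  rw [coverComp, ← Submodule.span_eq (𝒲 g), Submodule.map_span, Submodule.span_eq]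
  congr 1
  ext z
  simp [eq_comm]

theorem iSupIndep_coverComp (𝒲 : G → Submodule F W) : iSupIndep (coverComp 𝒲) :=
  (iSupIndep_range_flip_mk_basis (MonoidAlgebra.basis G F)).mono fun g ↦ by
    rw [coverComp_eq_map]; exact LinearMap.map_le_range

theorem coverComp_mul_le {𝒲 : G → Submodule F W} (hmul : ∀ g h : G, ∀ a ∈ 𝒲 g, ∀ b ∈ 𝒲 h, a * b ∈ 𝒲 (g * h))
    (g h : G) : coverComp 𝒲 g * coverComp 𝒲 h ≤ coverComp 𝒲 (g * h) := by
  rw [coverComp, coverComp, Submodule.span_mul_span, Submodule.span_le]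
  rintro _ ⟨_, ⟨a, ha, rfl⟩, _, ⟨b, hb, rfl⟩, rfl⟩
  refine Submodule.subset_span ⟨a * b, hmul g h a ha b hb, ?_⟩
  simp only [Algebra.TensorProduct.tmul_mul_tmul, MonoidAlgebra.single_mul_single, one_mul]

theorem map_augmentTensor_coverComp {B : Type*} [Ring B] [Algebra F B] (η : W →ₐ[F] B)
    (𝒲 : G → Submodule F W) (g : G) :
    (coverComp 𝒲 g).map (augmentTensor (G := G) η).toLinearMap = (𝒲 g).map η.toLinearMap := by
  rw [coverComp_eq_map, ← Submodule.map_comp]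
  congr 1
  ext a
  simp

end CoverComp

theorem stmt_6_general {F : Type*} [Field F] {G : Type*} [Group G]
    {W : Type*} [Ring W] [Algebra F W]
    {B : Type*} [Ring B] [Algebra F B]
    (ℬ : G → Submodule F B)
    (η : W →ₐ[F] B) (hη : Function.Surjective η)
    (𝒲 : G → Submodule F W)
    (h𝒲 : ∀ g, 𝒲 g = (ℬ g).comap η.toLinearMap)
    (hWmul : ∀ g h : G, ∀ a ∈ 𝒲 g, ∀ b ∈ 𝒲 h, a * b ∈ 𝒲 (g * h)) :
    iSupIndep (coverComp 𝒲) ∧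
    (∀ g h : G, ∀ x ∈ coverComp 𝒲 g, ∀ y ∈ coverComp 𝒲 h,
      x * y ∈ coverComp 𝒲 (g * h)) ∧
    (⨆ g, coverComp 𝒲 g) =
      NonUnitalSubalgebra.toSubmodule
        (NonUnitalAlgebra.adjoin F (⋃ g, (coverComp 𝒲 g : Set (W ⊗[F] MonoidAlgebra F G)))) ∧
    (∀ g, Submodule.map
        ((TensorProduct.rid F B).toLinearMap ∘ₗ
          TensorProduct.map η.toLinearMap
            (MonoidAlgebra.lift F F G (1 : G →* F)).toLinearMap)
        (coverComp 𝒲 g) = ℬ g) ∧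
    (∀ x y : W ⊗[F] MonoidAlgebra F G,
      ((TensorProduct.rid F B).toLinearMap ∘ₗ
          TensorProduct.map η.toLinearMap
            (MonoidAlgebra.lift F F G (1 : G →* F)).toLinearMap) (x * y) =
        ((TensorProduct.rid F B).toLinearMap ∘ₗ
          TensorProduct.map η.toLinearMap
            (MonoidAlgebra.lift F F G (1 : G →* F)).toLinearMap) x *
        ((TensorProduct.rid F B).toLinearMap ∘ₗ
          TensorProduct.map η.toLinearMap
            (MonoidAlgebra.lift F F G (1 : G →* F)).toLinearMap) y) := by
  have hmul g h x (hx : x ∈ coverComp 𝒲 g) y (hy : y ∈ coverComp 𝒲 h) :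
      x * y ∈ coverComp 𝒲 (g * h) :=
    coverComp_mul_le hWmul g h (Submodule.mul_mem_mul hx hy)
  rw [← toLinearMap_augmentTensor]
  refine ⟨iSupIndep_coverComp 𝒲, hmul,
    (NonUnitalAlgebra.toSubmodule_adjoin_iUnion_eq_iSup hmul).symm, fun g ↦ ?_,
    map_mul (augmentTensor η)⟩
  rw [map_augmentTensor_coverComp, h𝒲, Submodule.map_comap_eq_of_surjective hη]

/-- Let `W` be an `F`-algebra covered by subspaces `W_g` (`g ∈ G`, `G`
finite) with `W_g W_h ⊆ W_{gh}` and `∑_g W_g = W`.  Inside `W ⊗_F FG` the subspaces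
`C g = W_g ⊗ Fg` are independent, multiply correctly (`C g · C h ⊆ C (gh)`), and the
subalgebra `W_G` they generate is exactly their sum — so `W_G` is genuinely `G`-graded
with components `W_g ⊗ Fg`.  Moreover, when the `W_g` arise as preimages of the
components `ℬ g` of a genuinely `G`-graded algebra `B` under a surjection `η : W → B`,
the map `x ⊗ g ↦ η x` is a multiplicative `G`-graded surjection: it carries each
component `C g` onto `ℬ g`. -/
theorem stmt_6 {F : Type*} [Field F] {G : Type*} [Group G] [Finite G] [DecidableEq G]
    {W : Type*} [Ring W] [Algebra F W]
    {B : Type*} [Ring B] [Algebra F B]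
    (ℬ : G → Submodule F B) [DirectSum.Decomposition ℬ]
    (hBmul : ∀ g h : G, ∀ a ∈ ℬ g, ∀ b ∈ ℬ h, a * b ∈ ℬ (g * h))
    (η : W →ₐ[F] B) (hη : Function.Surjective η)
    (𝒲 : G → Submodule F W)
    (h𝒲 : ∀ g, 𝒲 g = (ℬ g).comap η.toLinearMap)
    (hWmul : ∀ g h : G, ∀ a ∈ 𝒲 g, ∀ b ∈ 𝒲 h, a * b ∈ 𝒲 (g * h))
    (hWcover : (⨆ g, 𝒲 g) = (⊤ : Submodule F W)) :
    iSupIndep (coverComp 𝒲) ∧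
    (∀ g h : G, ∀ x ∈ coverComp 𝒲 g, ∀ y ∈ coverComp 𝒲 h,
      x * y ∈ coverComp 𝒲 (g * h)) ∧
    (⨆ g, coverComp 𝒲 g) =
      NonUnitalSubalgebra.toSubmodule
        (NonUnitalAlgebra.adjoin F (⋃ g, (coverComp 𝒲 g : Set (W ⊗[F] MonoidAlgebra F G)))) ∧
    (∀ g, Submodule.map
        ((TensorProduct.rid F B).toLinearMap ∘ₗ
          TensorProduct.map η.toLinearMap
            (MonoidAlgebra.lift F F G (1 : G →* F)).toLinearMap)
        (coverComp 𝒲 g) = ℬ g) ∧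
    (∀ x y : W ⊗[F] MonoidAlgebra F G,
      ((TensorProduct.rid F B).toLinearMap ∘ₗ
          TensorProduct.map η.toLinearMap
            (MonoidAlgebra.lift F F G (1 : G →* F)).toLinearMap) (x * y) =
        ((TensorProduct.rid F B).toLinearMap ∘ₗ
          TensorProduct.map η.toLinearMap
            (MonoidAlgebra.lift F F G (1 : G →* F)).toLinearMap) x *
        ((TensorProduct.rid F B).toLinearMap ∘ₗ
          TensorProduct.map η.toLinearMap
            (MonoidAlgebra.lift F F G (1 : G →* F)).toLinearMap) y) :=
  stmt_6_general ℬ η hη 𝒲 h𝒲 hWmul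
end

section
/- Let A be a G-graded algebra over a field F, I a G-graded two-sided ideal of A, and \Lambda = F[\theta_1,...,\theta_n] a commutative finitely generated F-algebra acting on I by F-linear operators commuting with left and right multiplication by elements of A. Let K be the G-graded ideal of the polynomial ring A[\lambda_1,...,\lambda_n] (with \lambda_i central of degree e) generated by the elements \lambda_i x - \theta_i x for all i and all x \in I. Then the natural map A \to A[\lambda_1,...,\lambda_n]/K is injective. -/
/-! Fix a linear complement `V` of `I` in `A`. Since the `θ_i` commute, `I` is a module over
`F[λ]`, and `a ⊗ f ↦ f(0) • v + f(θ) x` for `a = v + x` (`v ∈ V`, `x ∈ I`) is an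
`F`-linear retraction `A[λ] → A` of the inclusion. Because the `θ_i` commute with
multiplication by `A`, it takes equal values on `c (λ_i x) d` and `c (θ_i x) d`, so it is
constant on the classes modulo `K`. -/

open scoped TensorProduct

/-- The relation imposing `λ_i x = θ_i x` for `x ∈ I` on
`A[λ_1,…,λ_n] = A ⊗_F F[λ_1,…,λ_n]`. -/
def interpRel {F : Type*} [Field F] {A : Type*} [Ring A] [Algebra F A] {n : ℕ}
    (I : TwoSidedIdeal A) (θ : Fin n → (A →ₗ[F] A)) :
    (A ⊗[F] MvPolynomial (Fin n) F) → (A ⊗[F] MvPolynomial (Fin n) F) → Prop :=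
  fun p q => ∃ (i : Fin n) (x : A), x ∈ I ∧
    p = x ⊗ₜ[F] MvPolynomial.X i ∧ q = (θ i x) ⊗ₜ[F] 1

/-- The largest ring congruence contained in the kernel of `ψ`. -/
def AddMonoidHom.sandwichCon {R C : Type*} [Semiring R] [AddCommMonoid C] (ψ : R →+ C) :
    RingCon R where
  r x y := ∀ c d, ψ (c * x * d) = ψ (c * y * d)
  iseqv :=
    { refl := fun _ _ _ => rfl
      symm := fun h c d => (h c d).symm
      trans := fun h h' c d => (h c d).trans (h' c d) }
  add' h h' c d := by simp only [mul_add, add_mul, map_add, h c d, h' c d]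
  mul' {x y x' y'} h h' c d := by
    calc ψ (c * (x * x') * d) = ψ ((c * x) * x' * d) := by rw [← mul_assoc c]
      _ = ψ ((c * x) * y' * d) := h' _ _
      _ = ψ (c * x * (y' * d)) := by rw [mul_assoc]
      _ = ψ (c * y * (y' * d)) := h _ _
      _ = ψ (c * (y * y') * d) := by rw [mul_assoc, mul_assoc, mul_assoc]

theorem RingQuot.injective_mkAlgHom_comp_of_leftInverse {R B C : Type*} [CommSemiring R]
    [Semiring B] [Algebra R B] [Semiring C] [Algebra R C] {r : B → B → Prop}
    (f : C →ₐ[R] B) (ψ : B →+ C)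
    (hψ : ∀ x y, r x y → ∀ c d, ψ (c * x * d) = ψ (c * y * d))
    (hf : ∀ x, ψ (f x) = x) : Function.Injective ((mkAlgHom R r).comp f) := by
  intro x y h
  have hrel : Relation.EqvGen (Rel r) (f x) (f y) := by
    apply Quot.eqvGen_exact
    simpa [mkAlgHom_def, mkRingHom_def] using h
  rw [eqvGen_rel_eq] at hrel
  have := (RingCon.ringConGen_le.mpr hψ : ringConGen r ≤ ψ.sandwichCon) hrel 1 1
  simpa [hf] using this

open scoped IsMulCommutative in
noncomputable def MvPolynomial.aevalOfCommute {R B σ : Type*} [CommSemiring R] [Semiring B]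
    [Algebra R B] (x : σ → B) (hx : ∀ i j, Commute (x i) (x j)) : MvPolynomial σ R →ₐ[R] B :=
  have := Algebra.isMulCommutative_adjoin R (s := Set.range x) <| by
    rintro _ ⟨i, rfl⟩ _ ⟨j, rfl⟩
    exact hx i j
  (Algebra.adjoin R (Set.range x)).val.comp
    (aeval fun i => ⟨x i, Algebra.subset_adjoin ⟨i, rfl⟩⟩)

@[simp]
theorem MvPolynomial.aevalOfCommute_X {R B σ : Type*} [CommSemiring R] [Semiring B]
    [Algebra R B] (x : σ → B) (hx : ∀ i j, Commute (x i) (x j)) (i : σ) :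
    aevalOfCommute (R := R) x hx (X i) = x i := by
  simp [aevalOfCommute]

section InterpretationMap

open MvPolynomial

variable {F M σ : Type*} [CommRing F] [AddCommGroup M] [Module F M] {S : Submodule F M}

noncomputable def interpretationMap (π : M →ₗ[F] S)
    (φ : MvPolynomial σ F →ₐ[F] Module.End F S) : M ⊗[F] MvPolynomial σ F →ₗ[F] M :=
  TensorProduct.lift <| LinearMap.mk₂ F (fun a f => f.coeff 0 • (a - π a) + (φ f (π a) : M))
    (fun a a' f => by
      simp only [map_add, Submodule.coe_add, add_sub_add_comm, smul_add]; abel)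
    (fun c a f => by simp [smul_sub, smul_comm c])
    (fun a f f' => by simp only [coeff_add, map_add, add_smul, LinearMap.add_apply,
      Submodule.coe_add]; abel)
    (fun c a f => by simp [smul_smul, smul_sub])

variable (π : M →ₗ[F] S) (φ : MvPolynomial σ F →ₐ[F] Module.End F S)

theorem interpretationMap_tmul (a : M) (f : MvPolynomial σ F) :
    interpretationMap π φ (a ⊗ₜ f) = f.coeff 0 • (a - π a) + (φ f (π a) : M) := rfl

@[simp]
theorem interpretationMap_tmul_one (a : M) : interpretationMap π φ (a ⊗ₜ 1) = a := by
  simp [interpretationMap_tmul]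

theorem interpretationMap_tmul_of_projection {π} (hπ : ∀ s : S, π s = s) (s : S)
    (f : MvPolynomial σ F) : interpretationMap π φ ((s : M) ⊗ₜ f) = (φ f s : M) := by
  simp [interpretationMap_tmul, hπ]

end InterpretationMap

section Sandwich

open MvPolynomial

variable {F A σ : Type*} [CommRing F] [Ring A] [Algebra F A] {I : TwoSidedIdeal A}
  {θ : σ → A →ₗ[F] A} {π : A →ₗ[F] I.asIdeal.restrictScalars F}
  {φ : MvPolynomial σ F →ₐ[F] Module.End F (I.asIdeal.restrictScalars F)}

theorem interpretationMap_mul_tmul_X_mul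
    (hθl : ∀ i (a : A), ∀ x ∈ I, θ i (a * x) = a * θ i x)
    (hθr : ∀ i (a : A), ∀ x ∈ I, θ i (x * a) = θ i x * a)
    (hπ : ∀ s : I.asIdeal.restrictScalars F, π s = s) (hφ : ∀ i s, (φ (X i) s : A) = θ i s)
    {x : A} (hx : x ∈ I) (i : σ) (c d : A ⊗[F] MvPolynomial σ F) :
    interpretationMap π φ (c * (x ⊗ₜ X i) * d) =
      interpretationMap π φ (c * (θ i x ⊗ₜ 1) * d) := by
  induction c using TensorProduct.induction_on with
  | zero => simp
  | add c c' hc hc' => simp only [add_mul, map_add, hc, hc']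
  | tmul a f =>
    induction d using TensorProduct.induction_on with
    | zero => simp
    | add d d' hd hd' => simp only [mul_add, map_add, hd, hd']
    | tmul b g =>
      let s : I.asIdeal.restrictScalars F :=
        ⟨a * x * b, I.mul_mem_right _ _ (I.mul_mem_left _ _ hx)⟩
      have hθs : (φ (X i) s : A) = a * θ i x * b := by
        rw [hφ]
        change θ i (a * x * b) = _
        rw [mul_assoc, mul_assoc, hθl i a _ (I.mul_mem_right _ _ hx), hθr i b x hx]
      simp only [Algebra.TensorProduct.tmul_mul_tmul, mul_one, ← hθs]
      rw [mul_right_comm, interpretationMap_tmul_of_projection φ hπ s,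
        interpretationMap_tmul_of_projection φ hπ, map_mul, Module.End.mul_apply]

end Sandwich

theorem stmt_9_general {F : Type*} [Field F]
    {A : Type*} [Ring A] [Algebra F A]
    (I : TwoSidedIdeal A)
    (n : ℕ) (θ : Fin n → (A →ₗ[F] A))
    (hθI : ∀ i, ∀ x ∈ I, θ i x ∈ I)
    (hθl : ∀ i (a : A), ∀ x ∈ I, θ i (a * x) = a * θ i x)
    (hθr : ∀ i (a : A), ∀ x ∈ I, θ i (x * a) = θ i x * a)
    (hθc : ∀ i j, ∀ x ∈ I, θ i (θ j x) = θ j (θ i x)) :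
    Function.Injective
      ((RingQuot.mkAlgHom F (interpRel I θ)).comp
        (Algebra.TensorProduct.includeLeft :
          A →ₐ[F] A ⊗[F] MvPolynomial (Fin n) F)) := by
  let S := I.asIdeal.restrictScalars F
  obtain ⟨T, hT⟩ := S.exists_isCompl
  let θS : Fin n → Module.End F S := fun i => (θ i).restrict (hθI i)
  let φ := MvPolynomial.aevalOfCommute (R := F) θS fun i j =>
    LinearMap.ext fun s => Subtype.ext (hθc i j s s.2)
  have hφ : ∀ i (s : S), (φ (MvPolynomial.X i) s : A) = θ i s := fun i s =>
    congrArg Subtype.val (LinearMap.congr_fun (MvPolynomial.aevalOfCommute_X θS _ i) s)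
  refine RingQuot.injective_mkAlgHom_comp_of_leftInverse _
    (interpretationMap (S.projectionOnto T hT) φ).toAddMonoidHom ?_ (by simp)
  rintro _ _ ⟨i, x, hx, rfl, rfl⟩ c d
  exact interpretationMap_mul_tmul_X_mul hθl hθr (S.projectionOnto_apply_left hT) hφ hx i c d

/-- **Interpretation Lemma.** Let `A` be a `G`-graded algebra over `F`,
`I` a graded two-sided ideal, and `Λ = F[θ_1,…,θ_n]` a commutative finitely generated
algebra of `F`-linear operators acting on `I`, commuting with left and right
multiplication by `A`, with each other, and preserving degrees.  Let `K` be the ideal of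
`A[λ_1,…,λ_n]` generated by the elements `λ_i x − θ_i x` (`x ∈ I`).  Then the natural
map `A → A[λ_1,…,λ_n]/K` is injective. -/
theorem stmt_9 {F : Type*} [Field F] {G : Type*} [Group G] [DecidableEq G]
    {A : Type*} [Ring A] [Algebra F A]
    (𝒜 : G → Submodule F A) [DirectSum.Decomposition 𝒜]
    (hmul : ∀ g h : G, ∀ a ∈ 𝒜 g, ∀ b ∈ 𝒜 h, a * b ∈ 𝒜 (g * h))
    (I : TwoSidedIdeal A)
    (hIgr : ∀ x ∈ I, ∀ g : G, ((DirectSum.decompose 𝒜 x) g : A) ∈ I)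
    (n : ℕ) (θ : Fin n → (A →ₗ[F] A))
    (hθI : ∀ i, ∀ x ∈ I, θ i x ∈ I)
    (hθl : ∀ i (a : A), ∀ x ∈ I, θ i (a * x) = a * θ i x)
    (hθr : ∀ i (a : A), ∀ x ∈ I, θ i (x * a) = θ i x * a)
    (hθc : ∀ i j, ∀ x ∈ I, θ i (θ j x) = θ j (θ i x))
    (hθgr : ∀ i (g : G), ∀ x ∈ I, x ∈ 𝒜 g → θ i x ∈ 𝒜 g) :
    Function.Injective
      ((RingQuot.mkAlgHom F (interpRel I θ)).comp
        (Algebra.TensorProduct.includeLeft :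
          A →ₐ[F] A ⊗[F] MvPolynomial (Fin n) F)) :=
  stmt_9_general I n θ hθI hθl hθr hθc
end

section
/- In the matrix algebra M_k(F), there exists a sequence consisting of each of the k^2 matrix units E_{i,j} (1 \le i,j \le k) exactly once, whose product (in that order) equals E_{1,1}. -/
/-!
Read `E_{i,j}` as the edge `i → j` of the complete directed graph with loops on `k` vertices.
Since `E_{a,b} E_{b,c} = E_{a,c}`, the product along a walk from `a` to `b` is `E_{a,b}`, so it
suffices to find an Eulerian circuit based at `0`. It is built shell by shell: the edges `(i, j)`
with `max i j = n ≥ 1` form the closed walk `0 → n → n → 1 → n → 2 → ⋯ → n-1 → n → 0`,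
and the shell `n = 0` is the loop at `0`.
-/

open Matrix

theorem List.perm_toList_univ_of_forall_mem {α : Type*} [Fintype α] {l : List α}
    (hmem : ∀ x, x ∈ l) (hlen : l.length ≤ Fintype.card α) : l.Perm Finset.univ.toList :=
  ((Finset.nodup_toList _).subperm fun x _ => hmem x).perm_of_length_le
    (by rwa [Finset.length_toList, Finset.card_univ]) |>.symm

inductive IsWalk {ι : Type*} : ι → ι → List (ι × ι) → Prop
  | nil (a : ι) : IsWalk a a []
  | cons (a b : ι) {c : ι} {l : List (ι × ι)} : IsWalk b c l → IsWalk a c ((a, b) :: l)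

namespace IsWalk

variable {ι κ : Type*} {a b c : ι} {l m : List (ι × ι)}

theorem append (hl : IsWalk a b l) (hm : IsWalk b c m) : IsWalk a c (l ++ m) := by
  induction hl with
  | nil => exact hm
  | cons a b _ ih => exact cons a b (ih hm)

theorem flatMap {α : Type*} {f : α → List (ι × ι)} (hf : ∀ x, IsWalk a a (f x)) :
    ∀ xs : List α, IsWalk a a (xs.flatMap f)
  | [] => nil a
  | x :: xs => (hf x).append (flatMap hf xs)

theorem map (f : ι → κ) (hl : IsWalk a b l) : IsWalk (f a) (f b) (l.map (Prod.map f f)) := by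
  induction hl with
  | nil a => exact nil (f a)
  | cons a b _ ih => exact cons (f a) (f b) ih

variable {R : Type*} [Semiring R] [DecidableEq ι] [Fintype ι]

theorem single_mul_prod_single {i : ι} {x : R} (hl : IsWalk a b l) :
    single i a x * (l.map fun p => single p.1 p.2 (1 : R)).prod = single i b x := by
  induction hl generalizing x with
  | nil => exact mul_one _
  | cons a b _ ih => simp only [List.map_cons, List.prod_cons, ← mul_assoc,
      single_mul_single_same, mul_one, ih]

theorem prod_single (hl : IsWalk a b l) (hne : l ≠ []) :
    (l.map fun p => single p.1 p.2 (1 : R)).prod = single a b 1 := by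
  cases hl with
  | nil => exact absurd rfl hne
  | cons a b hl' => exact hl'.single_mul_prod_single

end IsWalk

def spokes (n : ℕ) (js : List ℕ) : List (ℕ × ℕ) :=
  js.flatMap fun j => [(n, j), (j, n)]

def shellWalk : ℕ → List (ℕ × ℕ)
  | 0 => [(0, 0)]
  | n + 1 => (0, n + 1) :: (n + 1, n + 1) :: (spokes (n + 1) (List.range' 1 n) ++ [(n + 1, 0)])

def squareWalk : ℕ → List (ℕ × ℕ)
  | 0 => []
  | n + 1 => squareWalk n ++ shellWalk n

theorem isWalk_spokes (n : ℕ) (js : List ℕ) : IsWalk n n (spokes n js) :=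
  IsWalk.flatMap (fun j => .cons n j (.cons j n (.nil n))) js

theorem isWalk_shellWalk : ∀ n, IsWalk 0 0 (shellWalk n)
  | 0 => .cons 0 0 (.nil 0)
  | n + 1 => .cons 0 (n + 1) (.cons (n + 1) (n + 1)
      ((isWalk_spokes _ _).append (.cons (n + 1) 0 (.nil 0))))

theorem isWalk_squareWalk : ∀ k, IsWalk 0 0 (squareWalk k)
  | 0 => .nil 0
  | k + 1 => (isWalk_squareWalk k).append (isWalk_shellWalk k)

theorem length_shellWalk (n : ℕ) : (shellWalk n).length = 2 * n + 1 := by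
  cases n
  · rfl
  · simp [shellWalk, spokes]; ring

theorem length_squareWalk (k : ℕ) : (squareWalk k).length = k ^ 2 := by
  induction k with
  | zero => rfl
  | succ k ih => rw [squareWalk, List.length_append, ih, length_shellWalk]; ring

theorem mem_spokes {n j : ℕ} {js : List ℕ} (hj : j ∈ js) :
    (n, j) ∈ spokes n js ∧ (j, n) ∈ spokes n js := by
  simp only [spokes, List.mem_flatMap, List.mem_cons, Prod.mk.injEq, List.not_mem_nil]
  exact ⟨⟨j, hj, by simp⟩, ⟨j, hj, by simp⟩⟩

theorem mem_shellWalk {i j : ℕ} : (i, j) ∈ shellWalk (max i j) := by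
  rcases Nat.eq_zero_or_pos (max i j) with h | h
  · obtain ⟨rfl, rfl⟩ : i = 0 ∧ j = 0 := by omega
    simp [shellWalk]
  obtain ⟨n, hn⟩ := Nat.exists_eq_add_of_lt h
  rw [hn, zero_add, shellWalk]
  simp only [List.mem_cons, List.mem_append, Prod.mk.injEq, List.not_mem_nil, or_false]
  have inner {m : ℕ} (h1 : 1 ≤ m) (h2 : m ≤ n) : m ∈ List.range' 1 n :=
    List.mem_range'_1.2 ⟨h1, by omega⟩
  rcases (by omega : i = 0 ∧ j = n + 1 ∨ i = n + 1 ∧ j = n + 1 ∨ i = n + 1 ∧ j = 0 ∨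
      i = n + 1 ∧ 1 ≤ j ∧ j ≤ n ∨ j = n + 1 ∧ 1 ≤ i ∧ i ≤ n) with
    h | h | h | ⟨rfl, hj⟩ | ⟨rfl, hi⟩
  · exact .inl h
  · exact .inr (.inl h)
  · exact .inr (.inr (.inr h))
  · exact .inr (.inr (.inl (mem_spokes (inner hj.1 hj.2)).1))
  · exact .inr (.inr (.inl (mem_spokes (inner hi.1 hi.2)).2))

theorem mem_squareWalk {i j k : ℕ} (hi : i < k) (hj : j < k) : (i, j) ∈ squareWalk k := by
  induction k with
  | zero => omega
  | succ k ih =>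
    rw [squareWalk, List.mem_append]
    by_cases h : max i j = k
    · exact .inr (h ▸ mem_shellWalk)
    · exact .inl (ih (by omega) (by omega))

/-- In `M_k(F)` there is a sequence consisting of each of the `k²`
matrix units `E_{i,j}` exactly once whose product (in that order) equals `E_{1,1}`. -/
theorem stmt_13 {F : Type*} [Field F] (k : ℕ) (hk : 0 < k) :
    ∃ l : List (Fin k × Fin k),
      l.Perm (Finset.univ : Finset (Fin k × Fin k)).toList ∧
      (l.map fun p => Matrix.single p.1 p.2 (1 : F)).prod =
        Matrix.single ⟨0, hk⟩ ⟨0, hk⟩ (1 : F) := by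
  have : NeZero k := ⟨hk.ne'⟩
  have hwalk : IsWalk ⟨0, hk⟩ ⟨0, hk⟩
      ((squareWalk k).map (Prod.map (Fin.ofNat k) (Fin.ofNat k))) := by
    simpa [Fin.ext_iff] using (isWalk_squareWalk k).map (Fin.ofNat k)
  refine ⟨_, List.perm_toList_univ_of_forall_mem (fun p => ?_) ?_, hwalk.prod_single ?_⟩
  · exact List.mem_map.2 ⟨(p.1, p.2), mem_squareWalk p.1.2 p.2.2, by simp⟩
  · simp [length_squareWalk, sq]
  · simp [← List.length_pos_iff, length_squareWalk, hk]
end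

section
/- Let C be a commutative Noetherian ring and W = C\langle a_1,...,a_s \rangle an affine C-algebra possessing an essential Shirshov base whose elements are integral over C. Then W is a finitely generated C-module. -/
/-!
Let `N` be the `C`-submodule spanned by `1`, the elements of `D` and the subalgebras `C[y]`,
`y ∈ Y`. Since each `y` is integral, `C[y]` is a finitely generated module, so `N` is
finitely generated, and so is every power of `N`. A Shirshov monomial
`d₀ y₁^{k₁} d₁ ⋯ y_l^{k_l} d_l` is a product of `2l + 1 ≤ 2h + 1` elements of `N`, and as
`1 ∈ N` the powers of `N` increase, so all these monomials, hence all of `W`, lie in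
`N ^ (2h + 1)`.
-/

open Submodule

section ShirshovFactors

variable {C W : Type*} [CommRing C] [Ring W] [Algebra C W]

lemma Submodule.list_ofFn_prod_mem_pow (N : Submodule C W) {l : ℕ} (f : Fin l → W)
    (hf : ∀ i, f i ∈ N) : (List.ofFn f).prod ∈ N ^ l := by
  induction l with
  | zero => simpa using (one_le (P := (1 : Submodule C W))).mp le_rfl
  | succ l ih =>
    rw [List.ofFn_succ, List.prod_cons, pow_succ']
    exact mul_mem_mul (hf 0) (ih _ fun i => hf i.succ)

variable (C) in
def shirshovFactors (Y D : Finset W) : Submodule C W :=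
  span C (insert 1 (D : Set W)) ⊔ ⨆ y ∈ Y, Subalgebra.toSubmodule (Algebra.adjoin C {y})

variable {Y D : Finset W}

lemma one_le_shirshovFactors : 1 ≤ shirshovFactors C Y D :=
  Submodule.one_le.mpr <| mem_sup_left <| subset_span (Set.mem_insert 1 _)

lemma mem_shirshovFactors_of_mem {d : W} (hd : d ∈ D) : d ∈ shirshovFactors C Y D :=
  mem_sup_left <| subset_span (Set.mem_insert_of_mem 1 hd)

lemma pow_mem_shirshovFactors {y : W} (hy : y ∈ Y) (k : ℕ) :
    y ^ k ∈ shirshovFactors C Y D := by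
  have hle : Subalgebra.toSubmodule (Algebra.adjoin C {y}) ≤ shirshovFactors C Y D :=
    (le_biSup (fun y => Subalgebra.toSubmodule (Algebra.adjoin C {y})) hy).trans le_sup_right
  exact hle (pow_mem (Algebra.self_mem_adjoin_singleton C y) k)

lemma shirshovFactors_fg (hint : ∀ y ∈ Y, IsIntegral C y) : (shirshovFactors C Y D).FG :=
  (fg_span (D.finite_toSet.insert 1)).sup
    (fg_biSup Y _ fun y hy => (hint y hy).fg_adjoin_singleton)

end ShirshovFactors

theorem stmt_16_general {C : Type*} [CommRing C]
    {W : Type*} [Ring W] [Algebra C W]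
    (Y D : Finset W) (h : ℕ)
    (hspan : Submodule.span C {x : W | ∃ l : ℕ, l ≤ h ∧
        ∃ (d : Fin (l + 1) → W) (y : Fin l → W) (kk : Fin l → ℕ),
          (∀ i, d i ∈ D) ∧ (∀ i, y i ∈ Y) ∧
          x = d 0 * (List.ofFn fun i : Fin l => y i ^ kk i * d i.succ).prod} = ⊤)
    (hint : ∀ y ∈ Y, ∃ p : Polynomial C, p.Monic ∧ Polynomial.aeval y p = 0) :
    Module.Finite C W := by
  set N := shirshovFactors C Y D
  have hfg : (N ^ (2 * h + 1)).FG :=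
    (shirshovFactors_fg fun y hy => (hint y hy).elim fun p hp => ⟨p, hp⟩).pow _
  suffices hle : ⊤ ≤ N ^ (2 * h + 1) from ⟨top_unique hle ▸ hfg⟩
  rw [← hspan, span_le]
  rintro _ ⟨l, hl, d, y, kk, hd, hy, rfl⟩
  have hmono : N ^ (2 * l + 1) ≤ N ^ (2 * h + 1) :=
    pow_le_pow_right' one_le_shirshovFactors (by omega)
  refine hmono ?_
  rw [pow_succ', pow_mul]
  exact mul_mem_mul (mem_shirshovFactors_of_mem (hd 0)) <| list_ofFn_prod_mem_pow _ _ fun i =>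
    pow_two N ▸ mul_mem_mul (pow_mem_shirshovFactors (hy i) _) (mem_shirshovFactors_of_mem (hd _))

/-- Let `C` be a commutative Noetherian ring and
`W = C⟨a_1,…,a_s⟩` an affine `C`-algebra possessing an essential Shirshov base
(finite sets `Y`, `D` and a height `h` such that the elements
`d_{i_1} y_{i_1}^{k_1} d_{i_2} ⋯ d_{i_l} y_{i_l}^{k_l} d_{i_{l+1}}`, `l ≤ h`, span `W`
over `C`) whose elements are integral over `C`. Then `W` is a finitely generated
`C`-module. -/
theorem stmt_16 {C : Type*} [CommRing C] [IsNoetherianRing C]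
    {W : Type*} [Ring W] [Algebra C W]
    (s : ℕ) (a : Fin s → W) (hgen : Algebra.adjoin C (Set.range a) = ⊤)
    (Y D : Finset W) (h : ℕ)
    (hspan : Submodule.span C {x : W | ∃ l : ℕ, l ≤ h ∧
        ∃ (d : Fin (l + 1) → W) (y : Fin l → W) (kk : Fin l → ℕ),
          (∀ i, d i ∈ D) ∧ (∀ i, y i ∈ Y) ∧
          x = d 0 * (List.ofFn fun i : Fin l => y i ^ kk i * d i.succ).prod} = ⊤)
    (hint : ∀ y ∈ Y, ∃ p : Polynomial C, p.Monic ∧ Polynomial.aeval y p = 0) :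
    Module.Finite C W :=
  stmt_16_general Y D h hspan hint
end
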